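/- arXiv:2505.05333 — 3 statements merged into one kernel-verified Lean document; each statement's English description precedes it below -/
import Mathlib

section
/- Let V ∈ RH_q with q > n/2, n ≥ 3. The auxiliary function m(x,V) defined by 1/m(x,V) = sup{ r > 0 : r^{2-n} ∫_{B(x,r)} V(y) dy ≤ 1 } satisfies 0 < m(x,V) < ∞ for every x ∈ ℝⁿ, provided V is not identically zero. -/
open MeasureTheory

lemma holder_aux {α : Type*} [MeasurableSpace α] (μ : Measure α) [IsFiniteMeasure μ]
    {V : α → ℝ} {q : ℝ} (hq : 1 < q) (hV : ∀ x, 0 ≤ V x)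
    (hm : AEStronglyMeasurable V μ) (hint : Integrable (fun x => V x ^ q) μ) :
    ∫ x, V x ∂μ ≤ (μ Set.univ).toReal ^ (1 - 1/q) * (∫ x, V x ^ q ∂μ) ^ (1/q) := by
  have hq0 : 0 < q := lt_trans one_pos hq
  have hpq : q.HolderConjugate (Real.conjExponent q) := Real.HolderConjugate.conjExponent hq
  have hne : ENNReal.ofReal q ≠ 0 := by
    simp [ENNReal.ofReal_eq_zero, not_le, hq0]
  have hfmem : MemLp V (ENNReal.ofReal q) μ := by
    refine (memLp_norm_rpow_iff hm hne ENNReal.ofReal_ne_top).mp ?_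
    have h1 : (fun x => ‖V x‖ ^ ((ENNReal.ofReal q).toReal)) = fun x => V x ^ q := by
      funext y
      rw [ENNReal.toReal_ofReal hq0.le, Real.norm_of_nonneg (hV y)]
    rw [h1, ENNReal.div_self hne ENNReal.ofReal_ne_top]
    exact memLp_one_iff_integrable.2 hint
  have hgmem : MemLp (fun _ : α => (1:ℝ)) (ENNReal.ofReal (Real.conjExponent q)) μ :=
    memLp_const 1
  have H := integral_mul_le_Lp_mul_Lq_of_nonneg hpq
    (Filter.Eventually.of_forall hV) (Filter.Eventually.of_forall (fun _ => zero_le_one))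
    hfmem hgmem
  simp only [mul_one, Real.one_rpow] at H
  rw [integral_const, smul_eq_mul, mul_one] at H
  have h2 : (1:ℝ)/(Real.conjExponent q) = 1 - 1/q := by
    have := hpq.one_sub_inv
    rw [one_div, one_div, ← hpq.conjExponent_eq, this]
  rw [h2] at H
  exact H.trans_eq (mul_comm _ _)

/-- For V ∈ RH_q, q > n/2, n ≥ 3, V nonzero, the auxiliary function m(x,V)
satisfies 0 < m(x,V) < ∞; equivalently, the defining set of 1/m(x,V) is nonempty, bounded
above, and has positive supremum. -/
theorem auxiliary_function_finite_positive (n : ℕ) (hn : 3 ≤ n)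
    (V : EuclideanSpace ℝ (Fin n) → ℝ) (q : ℝ) (hq : (n : ℝ) / 2 < q)
    (hV : ∀ x, 0 ≤ V x)
    (hVne : ¬ (V =ᵐ[(volume : Measure (EuclideanSpace ℝ (Fin n)))] 0))
    (hloc : LocallyIntegrable (fun x => V x ^ q) volume)
    (C : ℝ) (hC : 0 < C)
    (hRH : ∀ (x : EuclideanSpace ℝ (Fin n)) (r : ℝ), 0 < r →
      ((volume (Metric.ball x r)).toReal⁻¹ * ∫ y in Metric.ball x r, V y ^ q) ^ (1 / q)
        ≤ C * ((volume (Metric.ball x r)).toReal⁻¹ * ∫ y in Metric.ball x r, V y)) :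
    ∀ x : EuclideanSpace ℝ (Fin n),
      ({r : ℝ | 0 < r ∧ r ^ ((2 : ℝ) - n) * ∫ y in Metric.ball x r, V y ≤ 1}).Nonempty ∧
      BddAbove {r : ℝ | 0 < r ∧ r ^ ((2 : ℝ) - n) * ∫ y in Metric.ball x r, V y ≤ 1} ∧
      0 < sSup {r : ℝ | 0 < r ∧ r ^ ((2 : ℝ) - n) * ∫ y in Metric.ball x r, V y ≤ 1} := by
  intro x
  have hn3 : (3:ℝ) ≤ (n:ℝ) := by exact_mod_cast hn
  have hq1 : 1 < q := by linarith
  have hq0 : 0 < q := lt_trans one_pos hq1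
  have hα : 0 < 2 - (n:ℝ)/q := by
    have : (n:ℝ)/q < 2 := by
      rw [div_lt_iff₀ hq0]; linarith
    linarith
  set γ : ℝ := 1 - 1/q with hγdef
  have hγ0 : 0 < γ := by
    have : 1/q < 1 := by rw [div_lt_one hq0]; exact hq1
    simp only [hγdef]; linarith
  set β : ℝ := (n:ℝ) * γ with hβdef
  have hβ0 : 0 < β := mul_pos (by positivity) hγ0
  have hβα : (2:ℝ) - (n:ℝ) + β = 2 - (n:ℝ)/q := by
    rw [hβdef, hγdef]
    field_simp
    ring
  -- measurability
  have hVq_m : AEStronglyMeasurable (fun y => V y ^ q) volume := hloc.aestronglyMeasurable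
  have hVm : AEStronglyMeasurable V volume := by
    have h := hVq_m.aemeasurable.pow_const q⁻¹
    exact h.aestronglyMeasurable.congr (by
      refine Filter.EventuallyEq.of_eq (funext fun y => ?_)
      rw [← Real.rpow_mul (hV y), mul_inv_cancel₀ hq0.ne', Real.rpow_one])
  -- integrability on balls
  have hIq : ∀ r : ℝ, IntegrableOn (fun y => V y ^ q) (Metric.ball x r) volume := by
    intro r
    refine (hloc.integrableOn_isCompact (isCompact_closedBall x |r|)).mono_set ?_
    exact (Metric.ball_subset_closedBall).trans (Metric.closedBall_subset_closedBall (le_abs_self r))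
  have hIV : ∀ r : ℝ, IntegrableOn V (Metric.ball x r) volume := by
    intro r
    have hg : IntegrableOn (fun y => 1 + V y ^ q) (Metric.ball x r) volume :=
      (integrableOn_const measure_ball_lt_top.ne).add (hIq r)
    refine Integrable.mono' hg hVm.restrict ?_
    refine Filter.Eventually.of_forall fun y => ?_
    rw [Real.norm_of_nonneg (hV y)]
    rcases le_or_gt (V y) 1 with h | h
    · have : (0:ℝ) ≤ V y ^ q := Real.rpow_nonneg (hV y) q
      linarith
    · have h1 : V y ^ (1:ℝ) ≤ V y ^ q := Real.rpow_le_rpow_of_exponent_le h.le hq1.le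
      rw [Real.rpow_one] at h1
      linarith
  -- volume formula
  set c : ℝ := (volume (Metric.ball (0 : EuclideanSpace ℝ (Fin n)) 1)).toReal with hcdef
  have hc0 : 0 < c := ENNReal.toReal_pos (Metric.measure_ball_pos _ _ one_pos).ne' measure_ball_lt_top.ne
  haveI : Nontrivial (EuclideanSpace ℝ (Fin n)) := by
    haveI : NeZero n := ⟨by omega⟩
    infer_instance
  have hvol : ∀ t : ℝ, 0 < t → (volume (Metric.ball x t)).toReal = t ^ ((n:ℝ)) * c := by
    intro t ht
    rw [Measure.addHaar_ball _ _ ht.le, ENNReal.toReal_mul,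
      ENNReal.toReal_ofReal (pow_nonneg ht.le _), finrank_euclideanSpace_fin,
      ← Real.rpow_natCast t n]
  -- nonnegativity and monotonicity of integrals
  have hI0 : ∀ r : ℝ, 0 ≤ ∫ y in Metric.ball x r, V y := fun r =>
    setIntegral_nonneg measurableSet_ball fun y _ => hV y
  have hK0 : ∀ r : ℝ, 0 ≤ ∫ y in Metric.ball x r, V y ^ q := fun r =>
    setIntegral_nonneg measurableSet_ball fun y _ => Real.rpow_nonneg (hV y) q
  have hKmono : ∀ s r : ℝ, s ≤ r →
      (∫ y in Metric.ball x s, V y ^ q) ≤ ∫ y in Metric.ball x r, V y ^ q := by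
    intro s r h
    exact setIntegral_mono_set (hIq r)
      (Filter.Eventually.of_forall fun y => Real.rpow_nonneg (hV y) q)
      ((Metric.ball_subset_ball h).eventuallyLE)
  -- Hölder on balls
  have hold : ∀ r : ℝ, 0 < r →
      (∫ y in Metric.ball x r, V y) ≤
        ((volume (Metric.ball x r)).toReal) ^ γ * (∫ y in Metric.ball x r, V y ^ q) ^ (1/q) := by
    intro r hr
    haveI : IsFiniteMeasure (volume.restrict (Metric.ball x r)) :=
      ⟨by rw [Measure.restrict_apply_univ]; exact measure_ball_lt_top⟩
    have H := holder_aux (volume.restrict (Metric.ball x r)) hq1 hV hVm.restrict (hIq r)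
    rwa [Measure.restrict_apply_univ] at H
  -- the key comparison inequality
  have key : ∀ s r : ℝ, 0 < s → s ≤ r →
      r ^ β * ∫ y in Metric.ball x s, V y ≤ C * s ^ β * ∫ y in Metric.ball x r, V y := by
    intro s r hs hsr
    have hr : 0 < r := lt_of_lt_of_le hs hsr
    set b : ℝ := (volume (Metric.ball x r)).toReal with hbdef
    have hb0 : 0 < b := ENNReal.toReal_pos (Metric.measure_ball_pos _ _ hr).ne' measure_ball_lt_top.ne
    set Kr : ℝ := ∫ y in Metric.ball x r, V y ^ q with hKrdef
    set Ir : ℝ := ∫ y in Metric.ball x r, V y with hIrdef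
    have h1 : (∫ y in Metric.ball x s, V y) ≤
        ((volume (Metric.ball x s)).toReal) ^ γ * Kr ^ (1/q) := by
      refine (hold s hs).trans ?_
      exact mul_le_mul_of_nonneg_left
        (Real.rpow_le_rpow (hK0 s) (hKmono s r hsr) (by positivity))
        (Real.rpow_nonneg ENNReal.toReal_nonneg _)
    have h2 : Kr ^ ((1:ℝ)/q) ≤ b ^ ((1:ℝ)/q) * (C * (b⁻¹ * Ir)) := by
      have hKreq : Kr = b * (b⁻¹ * Kr) := by field_simp
      calc Kr ^ ((1:ℝ)/q) = (b * (b⁻¹ * Kr)) ^ ((1:ℝ)/q) := by rw [← hKreq]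
        _ = b ^ ((1:ℝ)/q) * (b⁻¹ * Kr) ^ ((1:ℝ)/q) := by
            rw [Real.mul_rpow hb0.le (mul_nonneg (inv_nonneg.2 hb0.le) (hK0 r))]
        _ ≤ b ^ ((1:ℝ)/q) * (C * (b⁻¹ * Ir)) :=
            mul_le_mul_of_nonneg_left (hRH x r hr) (Real.rpow_nonneg hb0.le _)
    have h3 : (∫ y in Metric.ball x s, V y) ≤
        ((volume (Metric.ball x s)).toReal) ^ γ * (b ^ ((1:ℝ)/q) * (C * (b⁻¹ * Ir))) :=
      h1.trans (mul_le_mul_of_nonneg_left h2 (Real.rpow_nonneg ENNReal.toReal_nonneg _))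
    have ha : ((volume (Metric.ball x s)).toReal) ^ γ = s ^ β * c ^ γ := by
      rw [hvol s hs, Real.mul_rpow (Real.rpow_nonneg hs.le _) hc0.le,
        ← Real.rpow_mul hs.le]
    have hbγ : b ^ γ = r ^ β * c ^ γ := by
      rw [hbdef, hvol r hr, Real.mul_rpow (Real.rpow_nonneg hr.le _) hc0.le,
        ← Real.rpow_mul hr.le]
    have hb2 : b ^ ((1:ℝ)/q) * b⁻¹ = (r ^ β * c ^ γ)⁻¹ := by
      have e1 : b ^ ((1:ℝ)/q) * b⁻¹ = b ^ ((1:ℝ)/q - 1) := by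
        rw [Real.rpow_sub hb0, Real.rpow_one]; ring
      have e2 : (1:ℝ)/q - 1 = -γ := by rw [hγdef]; ring
      rw [e1, e2, Real.rpow_neg hb0.le, hbγ]
    have heq : ((volume (Metric.ball x s)).toReal) ^ γ * (b ^ ((1:ℝ)/q) * (C * (b⁻¹ * Ir)))
        = C * (s ^ β * c ^ γ) * ((r ^ β * c ^ γ)⁻¹ * Ir) := by
      rw [ha, ← hb2]; ring
    have hrβ : (0:ℝ) < r ^ β := Real.rpow_pos_of_pos hr _
    have hcγ : (0:ℝ) < c ^ γ := Real.rpow_pos_of_pos hc0 _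
    calc r ^ β * ∫ y in Metric.ball x s, V y
        ≤ r ^ β * (C * (s ^ β * c ^ γ) * ((r ^ β * c ^ γ)⁻¹ * Ir)) := by
          rw [← heq]
          exact mul_le_mul_of_nonneg_left h3 hrβ.le
      _ = C * s ^ β * Ir := by
          field_simp
  -- a radius with positive integral
  have hkex : ∃ k : ℕ, 0 < ∫ y in Metric.ball x (k:ℝ), V y := by
    by_contra h
    push_neg at h
    apply hVne
    have hae : ∀ k : ℕ, ∀ᵐ y ∂(volume.restrict (Metric.ball x (k:ℝ))), V y = 0 := by
      intro k
      have h0 : ∫ y in Metric.ball x (k:ℝ), V y = 0 := le_antisymm (h k) (hI0 k)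
      have := (integral_eq_zero_iff_of_nonneg hV (hIV (k:ℝ))).1 h0
      filter_upwards [this] with y hy using hy
    have := (ae_restrict_iUnion_iff (fun k : ℕ => Metric.ball x (k:ℝ)) (fun y => V y = 0)).2 hae
    rw [Metric.iUnion_ball_nat, Measure.restrict_univ] at this
    filter_upwards [this] with y hy using hy
  obtain ⟨k, hk⟩ := hkex
  have hkpos : 0 < (k:ℝ) := by
    rcases Nat.eq_zero_or_pos k with rfl | h
    · simp [Metric.ball_zero] at hk
    · exact_mod_cast h
  -- nonemptiness
  set α' : ℝ := 2 - (n:ℝ)/q with hα'def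
  set D : ℝ := C * ∫ y in Metric.ball x 1, V y with hDdef
  have hD0 : 0 ≤ D := mul_nonneg hC.le (hI0 1)
  set t0 : ℝ := min 1 ((1/(D+1)) ^ (1/α')) with ht0def
  have ht0 : 0 < t0 := lt_min one_pos (Real.rpow_pos_of_pos (by positivity) _)
  have ht01 : t0 ≤ 1 := min_le_left _ _
  have hmem : t0 ∈ {r : ℝ | 0 < r ∧ r ^ ((2 : ℝ) - n) * ∫ y in Metric.ball x r, V y ≤ 1} := by
    refine ⟨ht0, ?_⟩
    have h1 := key t0 1 ht0 ht01
    rw [Real.one_rpow, one_mul] at h1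
    have h2 : t0 ^ ((2:ℝ) - n) * ∫ y in Metric.ball x t0, V y
        ≤ t0 ^ ((2:ℝ) - n) * (C * t0 ^ β * ∫ y in Metric.ball x 1, V y) :=
      mul_le_mul_of_nonneg_left h1 (Real.rpow_nonneg ht0.le _)
    have h3 : t0 ^ ((2:ℝ) - n) * (C * t0 ^ β * ∫ y in Metric.ball x 1, V y) = D * t0 ^ α' := by
      rw [show t0 ^ ((2:ℝ) - n) * (C * t0 ^ β * ∫ y in Metric.ball x 1, V y)
          = (C * ∫ y in Metric.ball x 1, V y) * (t0 ^ ((2:ℝ) - (n:ℝ)) * t0 ^ β) by ring,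
        ← Real.rpow_add ht0, hβα]
    have h4 : t0 ^ α' ≤ 1/(D+1) := by
      have h5 : t0 ^ α' ≤ ((1/(D+1)) ^ (1/α')) ^ α' :=
        Real.rpow_le_rpow ht0.le (min_le_right _ _) hα.le
      rwa [← Real.rpow_mul (by positivity), one_div_mul_cancel hα.ne', Real.rpow_one] at h5
    have h6 : D * t0 ^ α' ≤ 1 := by
      calc D * t0 ^ α' ≤ D * (1/(D+1)) := mul_le_mul_of_nonneg_left h4 hD0
        _ ≤ 1 := by rw [mul_one_div]; exact div_le_one_of_le₀ (by linarith) (by positivity)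
    linarith [h2, h3 ▸ h2]
  have hbdd : BddAbove {r : ℝ | 0 < r ∧ r ^ ((2 : ℝ) - n) * ∫ y in Metric.ball x r, V y ≤ 1} := by
    set e : ℝ := (∫ y in Metric.ball x (k:ℝ), V y) / (C * (k:ℝ) ^ β) with hedef
    have he0 : 0 < e := div_pos hk (by positivity)
    refine ⟨max (k:ℝ) ((1/e) ^ (1/α')), fun r hr => ?_⟩
    obtain ⟨hr0, hrle⟩ := hr
    rcases le_or_gt r (k:ℝ) with h | h
    · exact le_trans h (le_max_left _ _)
    · have hkey := key (k:ℝ) r hkpos h.le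
      have hrn : (0:ℝ) < r ^ ((2:ℝ) - (n:ℝ)) := Real.rpow_pos_of_pos hr0 _
      have h4 : r ^ ((2:ℝ) - (n:ℝ)) * (r ^ β * ∫ y in Metric.ball x (k:ℝ), V y)
          ≤ r ^ ((2:ℝ) - (n:ℝ)) * (C * (k:ℝ) ^ β * ∫ y in Metric.ball x r, V y) :=
        mul_le_mul_of_nonneg_left hkey hrn.le
      have h5 : e * r ^ α' =
          (r ^ ((2:ℝ) - (n:ℝ)) * (r ^ β * ∫ y in Metric.ball x (k:ℝ), V y)) / (C * (k:ℝ) ^ β) := by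
        rw [show r ^ α' = r ^ ((2:ℝ) - (n:ℝ)) * r ^ β by rw [← Real.rpow_add hr0, hβα], hedef]
        field_simp
      have h6 : e * r ^ α' ≤ r ^ ((2:ℝ) - (n:ℝ)) * ∫ y in Metric.ball x r, V y := by
        rw [h5, div_le_iff₀ (by positivity)]
        exact h4.trans_eq (by ring)
      have h7 : e * r ^ α' ≤ 1 := h6.trans hrle
      have h8 : r ^ α' ≤ 1/e := by
        rw [le_div_iff₀ he0]
        linarith
      have h9 : r = (r ^ α') ^ (1/α') := by
        rw [← Real.rpow_mul hr0.le, mul_one_div_cancel hα.ne', Real.rpow_one]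
      calc r = (r ^ α') ^ (1/α') := h9
        _ ≤ (1/e) ^ (1/α') :=
            Real.rpow_le_rpow (Real.rpow_nonneg hr0.le _) h8 (by positivity)
        _ ≤ max (k:ℝ) ((1/e) ^ (1/α')) := le_max_right _ _
  exact ⟨⟨t0, hmem⟩, hbdd, lt_of_lt_of_le ht0 (le_csSup hbdd hmem)⟩
end

section
/- Let V ∈ RH_q with q > n/2, n ≥ 3. There is a constant C > 0 such that for all y ∈ ℝⁿ and 0 < r < R < ∞, r^{2-n} ∫_{B(y,r)} V(x) dx ≤ C (r/R)^{2 - n/q} · R^{2-n} ∫_{B(y,R)} V(x) dx. -/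
open MeasureTheory

private lemma rpow_exp_helper {r R c q : ℝ} (hr : 0 < r) (hR : 0 < R) (hc : 0 < c)
    (nn : ℝ) :
    r ^ ((2 : ℝ) - nn) * ((r ^ nn * c) ^ (1 - 1/q) * ((R ^ nn * c) ^ (1/q) * (R ^ nn * c)⁻¹))
      = (r / R) ^ ((2 : ℝ) - nn / q) * R ^ ((2 : ℝ) - nn) := by
  have hrc : (0:ℝ) < r ^ nn * c := mul_pos (Real.rpow_pos_of_pos hr _) hc
  have hRc : (0:ℝ) < R ^ nn * c := mul_pos (Real.rpow_pos_of_pos hR _) hc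
  have hrR : (0:ℝ) < r / R := div_pos hr hR
  have l1 : Real.log (r ^ nn * c) = nn * Real.log r + Real.log c := by
    rw [Real.log_mul (Real.rpow_pos_of_pos hr nn).ne' hc.ne', Real.log_rpow hr]
  have l2 : Real.log (R ^ nn * c) = nn * Real.log R + Real.log c := by
    rw [Real.log_mul (Real.rpow_pos_of_pos hR nn).ne' hc.ne', Real.log_rpow hR]
  have l3 : Real.log (r / R) = Real.log r - Real.log R := Real.log_div hr.ne' hR.ne'
  rw [← Real.rpow_neg_one (R ^ nn * c),
      Real.rpow_def_of_pos hrc (1 - 1/q), Real.rpow_def_of_pos hRc (1/q),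
      Real.rpow_def_of_pos hRc (-1), Real.rpow_def_of_pos hrR,
      l1, l2, l3, Real.rpow_def_of_pos hr (2 - nn), Real.rpow_def_of_pos hR (2 - nn),
      ← Real.exp_add, ← Real.exp_add, ← Real.exp_add, ← Real.exp_add]
  congr 1
  ring

/-- For V ∈ RH_q with q > n/2, n ≥ 3:
r^{2-n} ∫_{B(y,r)} V ≤ C (r/R)^{2-n/q} R^{2-n} ∫_{B(y,R)} V for 0 < r < R. -/
theorem reverse_holder_scaled_average (n : ℕ) (hn : 3 ≤ n)
    (V : EuclideanSpace ℝ (Fin n) → ℝ) (q : ℝ) (hq : (n : ℝ) / 2 < q)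
    (hV : ∀ x, 0 ≤ V x)
    (hloc : LocallyIntegrable (fun x => V x ^ q) volume)
    (C₀ : ℝ) (hC₀ : 0 < C₀)
    (hRH : ∀ (x : EuclideanSpace ℝ (Fin n)) (r : ℝ), 0 < r →
      ((volume (Metric.ball x r)).toReal⁻¹ * ∫ y in Metric.ball x r, V y ^ q) ^ (1 / q)
        ≤ C₀ * ((volume (Metric.ball x r)).toReal⁻¹ * ∫ y in Metric.ball x r, V y)) :
    ∃ C > 0, ∀ (y : EuclideanSpace ℝ (Fin n)) (r R : ℝ), 0 < r → r < R →
      r ^ ((2 : ℝ) - n) * ∫ x in Metric.ball y r, V x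
        ≤ C * (r / R) ^ ((2 : ℝ) - (n : ℝ) / q) *
            (R ^ ((2 : ℝ) - n) * ∫ x in Metric.ball y R, V x) := by
  have hn' : (3 : ℝ) ≤ (n : ℝ) := by exact_mod_cast hn
  have hq1 : 1 < q := by nlinarith
  have hq0 : 0 < q := lt_trans one_pos hq1
  -- measurability of V
  have hVqm : AEMeasurable (fun x => V x ^ q) volume := hloc.aestronglyMeasurable.aemeasurable
  have hVm : AEMeasurable V volume := by
    have hcont : Continuous (fun z : ℝ => z ^ q⁻¹) :=
      Real.continuous_rpow_const (inv_nonneg.mpr hq0.le)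
    have h2 : AEMeasurable (fun x => (V x ^ q) ^ q⁻¹) volume :=
      hcont.measurable.comp_aemeasurable hVqm
    have heq : (fun x => (V x ^ q) ^ q⁻¹) = V := by
      funext x
      rw [← Real.rpow_mul (hV x), mul_inv_cancel₀ hq0.ne', Real.rpow_one]
    rw [← heq]; exact h2
  refine ⟨C₀, hC₀, fun y r R hr hrR => ?_⟩
  have hR : 0 < R := hr.trans hrR
  set Br := Metric.ball y r with hBr
  set BR := Metric.ball y R with hBR
  have hsub : Br ⊆ BR := Metric.ball_subset_ball hrR.le
  set c : ℝ := (volume (Metric.ball (0 : EuclideanSpace ℝ (Fin n)) 1)).toReal with hc_def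
  have hc : 0 < c := ENNReal.toReal_pos (Metric.measure_ball_pos volume _ one_pos).ne'
    measure_ball_lt_top.ne
  have hvol : ∀ s : ℝ, 0 < s →
      (volume (Metric.ball y s)).toReal = s ^ (n : ℝ) * c := by
    intro s hs
    rw [Measure.addHaar_ball_of_pos volume y hs, ENNReal.toReal_mul,
        ENNReal.toReal_ofReal (pow_nonneg hs.le _), finrank_euclideanSpace_fin,
        ← Real.rpow_natCast s n]
  set vr : ℝ := (volume Br).toReal with hvr_def
  set vR : ℝ := (volume BR).toReal with hvR_def
  have hvr : vr = r ^ (n : ℝ) * c := hvol r hr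
  have hvR : vR = R ^ (n : ℝ) * c := hvol R hR
  have hvr0 : 0 < vr := by rw [hvr]; exact mul_pos (Real.rpow_pos_of_pos hr _) hc
  have hvR0 : 0 < vR := by rw [hvR]; exact mul_pos (Real.rpow_pos_of_pos hR _) hc
  set Ir : ℝ := ∫ x in Br, V x with hIr_def
  set IR : ℝ := ∫ x in BR, V x with hIR_def
  set Jr : ℝ := ∫ x in Br, V x ^ q with hJr_def
  set JR : ℝ := ∫ x in BR, V x ^ q with hJR_def
  have hVq_nonneg : ∀ x, 0 ≤ V x ^ q := fun x => Real.rpow_nonneg (hV x) q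
  have hJR_nonneg : 0 ≤ JR := setIntegral_nonneg measurableSet_ball fun x _ => hVq_nonneg x
  have hJr_nonneg : 0 ≤ Jr := setIntegral_nonneg measurableSet_ball fun x _ => hVq_nonneg x
  have hIR_nonneg : 0 ≤ IR := setIntegral_nonneg measurableSet_ball fun x _ => hV x
  -- integrability of V^q on BR
  have hJint : IntegrableOn (fun x => V x ^ q) BR volume :=
    (hloc.integrableOn_isCompact (isCompact_closedBall y R)).mono_set
      Metric.ball_subset_closedBall
  have hJintr : IntegrableOn (fun x => V x ^ q) Br volume := hJint.mono_set hsub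
  -- MemLp facts for Hölder on Br
  haveI : IsFiniteMeasure (volume.restrict Br) :=
    ⟨by rw [Measure.restrict_apply_univ]; exact measure_ball_lt_top⟩
  have hq_ne0 : (ENNReal.ofReal q) ≠ 0 := by
    simp only [ne_eq, ENNReal.ofReal_eq_zero, not_le]; exact hq0
  have hmeasr : AEStronglyMeasurable V (volume.restrict Br) :=
    hVm.aestronglyMeasurable.restrict
  have hmemV : MemLp V (ENNReal.ofReal q) (volume.restrict Br) := by
    have h1 : MemLp (fun x => ‖V x‖ ^ q) 1 (volume.restrict Br) := by
      rw [memLp_one_iff_integrable]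
      have heq : (fun x => ‖V x‖ ^ q) = fun x => V x ^ q := by
        funext x; rw [Real.norm_of_nonneg (hV x)]
      rw [heq]; exact hJintr
    have h2 : MemLp (fun x => ‖V x‖ ^ (ENNReal.ofReal q).toReal)
        (ENNReal.ofReal q / ENNReal.ofReal q) (volume.restrict Br) := by
      rw [ENNReal.toReal_ofReal hq0.le, ENNReal.div_self hq_ne0 ENNReal.ofReal_ne_top]
      exact h1
    exact (memLp_norm_rpow_iff hmeasr hq_ne0 ENNReal.ofReal_ne_top).mp h2
  -- conjugate exponent
  set p : ℝ := Real.conjExponent q with hp_def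
  have hpq : q.HolderConjugate p := Real.HolderConjugate.conjExponent hq1
  have hmem1 : MemLp (fun _ => (1 : ℝ)) (ENNReal.ofReal p) (volume.restrict Br) :=
    memLp_const 1
  -- Hölder
  have hHolder : Ir ≤ Jr ^ (1/q) * vr ^ (1/p) := by
    have h := integral_mul_le_Lp_mul_Lq_of_nonneg hpq
      (Filter.Eventually.of_forall hV) (Filter.Eventually.of_forall fun _ => zero_le_one)
      hmemV hmem1
    simpa [Real.one_rpow, smul_eq_mul, measureReal_def] using h
  -- monotonicity of J
  have hJmono : Jr ≤ JR :=
    setIntegral_mono_set hJint (Filter.Eventually.of_forall hVq_nonneg)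
      (HasSubset.Subset.eventuallyLE hsub)
  -- reverse Hölder at scale R
  have hRH' := hRH y R hR
  have hJRpow : JR ^ (1/q) ≤ vR ^ (1/q) * (C₀ * (vR⁻¹ * IR)) := by
    have hstep : JR ^ (1/q) = vR ^ (1/q) * ((vR⁻¹ * JR) ^ (1/q)) := by
      rw [Real.mul_rpow (inv_nonneg.mpr hvR0.le) hJR_nonneg,
          ← mul_assoc, ← Real.mul_rpow hvR0.le (inv_nonneg.mpr hvR0.le),
          mul_inv_cancel₀ hvR0.ne', Real.one_rpow, one_mul]
    rw [hstep]
    exact mul_le_mul_of_nonneg_left hRH' (Real.rpow_nonneg hvR0.le _)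
  -- combine
  have hp_inv : 1/p = 1 - 1/q := by
    have h := hpq.inv_add_inv_eq_one
    rw [one_div, one_div]; linarith
  have main : Ir ≤ C₀ * (vr ^ (1 - 1/q) * (vR ^ (1/q) * vR⁻¹)) * IR := by
    have h1 : Jr ^ (1/q) ≤ JR ^ (1/q) :=
      Real.rpow_le_rpow hJr_nonneg hJmono (by positivity)
    have h2 : Ir ≤ JR ^ (1/q) * vr ^ (1/p) :=
      hHolder.trans (mul_le_mul_of_nonneg_right h1 (Real.rpow_nonneg hvr0.le _))
    have h3 : Ir ≤ (vR ^ (1/q) * (C₀ * (vR⁻¹ * IR))) * vr ^ (1/p) :=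
      h2.trans (mul_le_mul_of_nonneg_right hJRpow (Real.rpow_nonneg hvr0.le _))
    calc Ir ≤ (vR ^ (1/q) * (C₀ * (vR⁻¹ * IR))) * vr ^ (1/p) := h3
    _ = C₀ * (vr ^ (1/p) * (vR ^ (1/q) * vR⁻¹)) * IR := by ring
    _ = C₀ * (vr ^ (1 - 1/q) * (vR ^ (1/q) * vR⁻¹)) * IR := by rw [hp_inv]
  -- final algebra
  have hrpow_pos : (0:ℝ) < r ^ ((2:ℝ) - n) := Real.rpow_pos_of_pos hr _
  calc r ^ ((2:ℝ) - n) * Ir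
      ≤ r ^ ((2:ℝ) - n) * (C₀ * (vr ^ (1 - 1/q) * (vR ^ (1/q) * vR⁻¹)) * IR) :=
        mul_le_mul_of_nonneg_left main hrpow_pos.le
    _ = C₀ * (r ^ ((2:ℝ) - n) * (vr ^ (1 - 1/q) * (vR ^ (1/q) * vR⁻¹))) * IR := by ring
    _ = C₀ * ((r/R) ^ ((2:ℝ) - (n:ℝ)/q) * R ^ ((2:ℝ) - n)) * IR := by
        rw [hvr, hvR, rpow_exp_helper hr hR hc]
    _ = C₀ * (r/R) ^ ((2:ℝ) - (n:ℝ)/q) * (R ^ ((2:ℝ) - n) * IR) := by ring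
end

section
/- Let η_t^α(s) for α ∈ (0,1) satisfy the subordinator bounds η_t^α(s) ≤ C t / s^{1+α} for all s, t > 0 and ∫₀^∞ s^{−γ} η₁^α(s) ds < ∞ for all γ > 0, together with the scaling η_t^α(s) = t^{−1/α} η₁^α(s/t^{1/α}). If a kernel G_s(x,y) satisfies |G_s(x,y)| ≤ C s^{−(n+1)/2} exp(−c|x−y|²/s), then the subordinated kernel H_t(x,y) = ∫₀^∞ η_t^α(s) G_s(x,y) ds satisfies |H_t(x,y)| ≤ C' · t / (t^{1/(2α)} + |x−y|)^{n+1+2α} for all x ≠ y and t > 0. -/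
open MeasureTheory Set Real

lemma aux_inv_gamma {β b : ℝ} (hβ : 1 < β) (hb : 0 < b) :
    IntegrableOn (fun s : ℝ => s ^ (-β) * Real.exp (-(b / s))) (Set.Ioi 0) volume ∧
    ∫ s in Set.Ioi 0, s ^ (-β) * Real.exp (-(b / s)) = b ^ (1 - β) * Real.Gamma (β - 1) := by
  set g : ℝ → ℝ := fun y => y ^ (β - 1 - 1) * Real.exp (-(b * y)) with hg
  have hb1 : (0:ℝ) < β - 1 := by linarith
  have hg_int : IntegrableOn g (Set.Ioi 0) volume := by
    have h0 := Real.GammaIntegral_convergent hb1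
    have h1 : IntegrableOn (fun y : ℝ => Real.exp (-(y * b)) * (y * b) ^ (β - 1 - 1))
        (Set.Ioi 0) volume := by
      have := (integrableOn_Ioi_comp_mul_right_iff
        (fun x : ℝ => Real.exp (-x) * x ^ (β - 1 - 1)) 0 hb).2
      rw [zero_mul] at this
      exact this h0
    have h2 := h1.const_mul (b ^ (-(β - 1 - 1)))
    refine IntegrableOn.congr_fun h2 (fun y hy => ?_) measurableSet_Ioi
    have hy0 : (0:ℝ) < y := hy
    rw [hg]
    simp only
    rw [Real.mul_rpow hy0.le hb.le, mul_comm y b]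
    have hbb : b ^ (-(β - 1 - 1)) * b ^ (β - 1 - 1) = 1 := by
      rw [← Real.rpow_add hb]; norm_num
    linear_combination (Real.exp (-(b * y)) * y ^ (β - 1 - 1)) * hbb
  have hgval : ∫ y in Set.Ioi 0, g y = b ^ (1 - β) * Real.Gamma (β - 1) := by
    have h := Real.integral_rpow_mul_exp_neg_mul_Ioi hb1 hb
    rw [hg]
    simp only
    rw [h, one_div, Real.inv_rpow hb.le, ← Real.rpow_neg hb.le,
      show -(β - 1) = 1 - β by ring]
  have heq : Set.EqOn (fun x : ℝ => (|(-1:ℝ)| * x ^ ((-1:ℝ) - 1)) • g (x ^ (-1:ℝ)))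
      (fun s : ℝ => s ^ (-β) * Real.exp (-(b / s))) (Set.Ioi 0) := by
    intro x hx
    have hx0 : (0:ℝ) < x := hx
    simp only [hg, smul_eq_mul, abs_neg, abs_one, one_mul]
    rw [Real.rpow_neg_one, Real.inv_rpow hx0.le, ← Real.rpow_neg hx0.le, ← div_eq_mul_inv,
      ← mul_assoc, ← Real.rpow_add hx0, show (-1:ℝ) - 1 + -(β - 1 - 1) = -β by ring]
  constructor
  · exact (((integrableOn_Ioi_comp_rpow_iff g (p := -1) (by norm_num)).2 hg_int).congr_fun
      heq measurableSet_Ioi)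
  · rw [← setIntegral_congr_fun measurableSet_Ioi heq,
      integral_comp_rpow_Ioi g (p := -1) (by norm_num), hgval]

lemma aux_scale (F : ℝ → ℝ) (hF : IntegrableOn F (Set.Ioi 0) volume) {l : ℝ} (hl : 0 < l) :
    IntegrableOn (fun s : ℝ => F (s * l⁻¹)) (Set.Ioi 0) volume ∧
    ∫ s in Set.Ioi 0, F (s * l⁻¹) = l * ∫ u in Set.Ioi 0, F u := by
  have hli : 0 < l⁻¹ := inv_pos.2 hl
  constructor
  · have h := (integrableOn_Ioi_comp_mul_right_iff F 0 hli).2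
    rw [zero_mul] at h
    exact h hF
  · rw [integral_comp_mul_right_Ioi F 0 hli, zero_mul, inv_inv, smul_eq_mul]

set_option maxHeartbeats 1000000 in
/-- subordination of a Gaussian-type gradient bound yields a polynomial-type
bound for the subordinated kernel. -/
theorem subordinated_kernel_bound (n : ℕ) (α c C : ℝ)
    (hα : 0 < α) (hα1 : α < 1) (hc : 0 < c) (hC : 0 < C)
    (η : ℝ → ℝ → ℝ)
    (hη_nonneg : ∀ t s : ℝ, 0 < t → 0 < s → 0 ≤ η t s)
    (hη_bound : ∀ t s : ℝ, 0 < t → 0 < s → η t s ≤ C * t / s ^ (1 + α))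
    (hη_scale : ∀ t s : ℝ, 0 < t → 0 < s →
      η t s = t ^ (-(1 / α)) * η 1 (s / t ^ (1 / α)))
    (hη_int : ∀ γ > (0 : ℝ),
      IntegrableOn (fun s : ℝ => s ^ (-γ) * η 1 s) (Set.Ioi 0) volume)
    (G : ℝ → EuclideanSpace ℝ (Fin n) → EuclideanSpace ℝ (Fin n) → ℝ)
    (hG : ∀ s > 0, ∀ x y : EuclideanSpace ℝ (Fin n),
      |G s x y| ≤ C * s ^ (-((n : ℝ) + 1) / 2) * Real.exp (-c * ‖x - y‖ ^ 2 / s)) :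
    ∃ C' > 0, ∀ t > 0, ∀ x y : EuclideanSpace ℝ (Fin n), x ≠ y →
      |∫ s in Set.Ioi (0 : ℝ), η t s * G s x y|
        ≤ C' * t / (t ^ (1 / (2 * α)) + ‖x - y‖) ^ ((n : ℝ) + 1 + 2 * α) := by
  set γ : ℝ := ((n : ℝ) + 1) / 2 with hγdef
  have hγ0 : 0 < γ := by positivity
  set p : ℝ := (n : ℝ) + 1 + 2 * α with hpdef
  have hp0 : 0 < p := by positivity
  set β : ℝ := 1 + α + γ with hβdef
  have hβ1 : 1 < β := by rw [hβdef]; linarith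
  set K : ℝ := ∫ u in Set.Ioi (0:ℝ), u ^ (-γ) * η 1 u with hKdef
  have hK0 : 0 ≤ K := by
    refine setIntegral_nonneg measurableSet_Ioi (fun u hu => ?_)
    exact mul_nonneg (Real.rpow_nonneg (le_of_lt hu) _) (hη_nonneg 1 u one_pos hu)
  set M : ℝ := c ^ (1 - β) * Real.Gamma (β - 1) with hMdef
  have hM0 : 0 ≤ M :=
    mul_nonneg (Real.rpow_nonneg hc.le _) (Real.Gamma_nonneg_of_nonneg (by linarith))
  have h2p : (0:ℝ) < 2 ^ p := Real.rpow_pos_of_pos (by norm_num) _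
  refine ⟨2 ^ p * (C * K + C * C * M) + 1, by positivity, ?_⟩
  intro t ht x y hxy
  set r : ℝ := ‖x - y‖ with hrdef
  have hr0 : 0 < r := norm_sub_pos_iff.mpr hxy
  set lam : ℝ := t ^ (1 / (2 * α)) with hlamdef
  have hlam0 : 0 < lam := Real.rpow_pos_of_pos ht _
  have hD0 : 0 < (lam + r) ^ p := Real.rpow_pos_of_pos (by linarith) _
  rw [le_div_iff₀ hD0]
  have habs : |∫ s in Set.Ioi (0:ℝ), η t s * G s x y|
      ≤ ∫ s in Set.Ioi (0:ℝ), |η t s * G s x y| := by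
    have h := norm_integral_le_integral_norm (μ := volume.restrict (Set.Ioi 0))
      (f := fun s : ℝ => η t s * G s x y)
    simpa only [Real.norm_eq_abs] using h
  rcases le_total r lam with hcase | hcase
  · -- Case A : r ≤ lam, use the t^{-(n+1)/(2α)} bound
    have hl2 : (0:ℝ) < t ^ (1 / α) := Real.rpow_pos_of_pos ht _
    obtain ⟨hint_scaled, hval_scaled⟩ :=
      aux_scale (fun u : ℝ => u ^ (-γ) * η 1 u) (hη_int γ hγ0) hl2
    set c1 : ℝ := C * t ^ (-(1 / α)) * (t ^ (1 / α)) ^ (-γ) with hc1def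
    have hc1nn : 0 ≤ c1 := by positivity
    have hbound : |∫ s in Set.Ioi (0:ℝ), η t s * G s x y|
        ≤ ∫ s in Set.Ioi (0:ℝ),
            c1 * ((s * (t ^ (1 / α))⁻¹) ^ (-γ) * η 1 (s * (t ^ (1 / α))⁻¹)) := by
      refine habs.trans ?_
      refine integral_mono_of_nonneg (ae_of_all _ fun s => abs_nonneg _)
        (hint_scaled.const_mul c1) ?_
      refine (ae_restrict_iff' measurableSet_Ioi).2 (ae_of_all _ fun s hs => ?_)
      have hs0 : (0:ℝ) < s := hs
      have h1 : |η t s * G s x y| = η t s * |G s x y| := by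
        rw [abs_mul, abs_of_nonneg (hη_nonneg t s ht hs0)]
      have h2 : |G s x y| ≤ C * s ^ (-γ) := by
        refine (hG s hs0 x y).trans ?_
        rw [show -((n : ℝ) + 1) / 2 = -γ by rw [hγdef]; ring]
        have hexple : Real.exp (-c * r ^ 2 / s) ≤ 1 := by
          rw [Real.exp_le_one_iff, show -c * r ^ 2 / s = -(c * r ^ 2 / s) by ring]
          exact neg_nonpos.2 (le_of_lt (by positivity))
        exact mul_le_of_le_one_right (by positivity) hexple
      have h3 : η t s * |G s x y| ≤ η t s * (C * s ^ (-γ)) :=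
        mul_le_mul_of_nonneg_left h2 (hη_nonneg t s ht hs0)
      have h4 : η t s * (C * s ^ (-γ))
          = c1 * ((s * (t ^ (1 / α))⁻¹) ^ (-γ) * η 1 (s * (t ^ (1 / α))⁻¹)) := by
        rw [hη_scale t s ht hs0,
          show s / t ^ (1 / α) = s * (t ^ (1 / α))⁻¹ from div_eq_mul_inv _ _]
        have hsplit : (s * (t ^ (1 / α))⁻¹) ^ (-γ) = s ^ (-γ) * (t ^ (1 / α)) ^ γ := by
          rw [Real.mul_rpow hs0.le (inv_nonneg.2 hl2.le), Real.inv_rpow hl2.le,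
            ← Real.rpow_neg hl2.le, neg_neg]
        rw [hsplit, hc1def]
        have hll : (t ^ (1 / α)) ^ (-γ) * (t ^ (1 / α)) ^ γ = 1 := by
          rw [← Real.rpow_add hl2]; norm_num
        linear_combination
          (-(C * t ^ (-(1 / α)) * s ^ (-γ) * η 1 (s * (t ^ (1 / α))⁻¹))) * hll
      show |η t s * G s x y|
          ≤ c1 * ((s * (t ^ (1 / α))⁻¹) ^ (-γ) * η 1 (s * (t ^ (1 / α))⁻¹))
      rw [h1, ← h4]
      exact h3
    have hval : (∫ s in Set.Ioi (0:ℝ),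
          c1 * ((s * (t ^ (1 / α))⁻¹) ^ (-γ) * η 1 (s * (t ^ (1 / α))⁻¹)))
        = c1 * (t ^ (1 / α) * K) := by
      rw [MeasureTheory.integral_const_mul, hval_scaled, hKdef]
    have hDle : (lam + r) ^ p ≤ 2 ^ p * t ^ (1 / (2 * α) * p) := by
      calc (lam + r) ^ p ≤ (2 * lam) ^ p :=
            Real.rpow_le_rpow (by positivity) (by linarith) hp0.le
        _ = 2 ^ p * lam ^ p := Real.mul_rpow (by norm_num) hlam0.le
        _ = 2 ^ p * t ^ (1 / (2 * α) * p) := by rw [hlamdef, ← Real.rpow_mul ht.le]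
    have hpow : t ^ (-(1 / α)) * t ^ (1 / α * -γ) * t ^ (1 / α) * t ^ (1 / (2 * α) * p) = t := by
      rw [← Real.rpow_add ht, ← Real.rpow_add ht, ← Real.rpow_add ht,
        show -(1 / α) + 1 / α * -γ + 1 / α + 1 / (2 * α) * p = 1 by
          rw [hγdef, hpdef]; field_simp; ring,
        Real.rpow_one]
    calc |∫ s in Set.Ioi (0:ℝ), η t s * G s x y| * (lam + r) ^ p
        ≤ (c1 * (t ^ (1 / α) * K)) * (lam + r) ^ p := by
          refine mul_le_mul_of_nonneg_right (hbound.trans_eq hval) hD0.le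
      _ ≤ (c1 * (t ^ (1 / α) * K)) * (2 ^ p * t ^ (1 / (2 * α) * p)) := by
          refine mul_le_mul_of_nonneg_left hDle (by positivity)
      _ = (2 ^ p * (C * K)) *
            (t ^ (-(1 / α)) * t ^ (1 / α * -γ) * t ^ (1 / α) * t ^ (1 / (2 * α) * p)) := by
          rw [hc1def, show (t ^ (1 / α)) ^ (-γ) = t ^ (1 / α * -γ) by
            rw [← Real.rpow_mul ht.le]]
          ring
      _ = (2 ^ p * (C * K)) * t := by rw [hpow]
      _ ≤ (2 ^ p * (C * K + C * C * M) + 1) * t := by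
          have hCCM : (0:ℝ) ≤ C * C * M := by positivity
          nlinarith [mul_nonneg h2p.le hCCM]
  · -- Case B : lam ≤ r, use the t * r^{-(n+1+2α)} bound
    have hb0 : (0:ℝ) < c * r ^ 2 := by positivity
    obtain ⟨hBint, hBval⟩ := aux_inv_gamma hβ1 hb0
    have hbound : |∫ s in Set.Ioi (0:ℝ), η t s * G s x y|
        ≤ ∫ s in Set.Ioi (0:ℝ), C * C * t * (s ^ (-β) * Real.exp (-(c * r ^ 2 / s))) := by
      refine habs.trans ?_
      refine integral_mono_of_nonneg (ae_of_all _ fun s => abs_nonneg _)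
        (hBint.const_mul (C * C * t)) ?_
      refine (ae_restrict_iff' measurableSet_Ioi).2 (ae_of_all _ fun s hs => ?_)
      have hs0 : (0:ℝ) < s := hs
      have h1 : |η t s * G s x y| = η t s * |G s x y| := by
        rw [abs_mul, abs_of_nonneg (hη_nonneg t s ht hs0)]
      have h2 : η t s * |G s x y|
          ≤ (C * t / s ^ (1 + α)) * (C * s ^ (-((n : ℝ) + 1) / 2)
              * Real.exp (-c * r ^ 2 / s)) := by
        refine mul_le_mul (hη_bound t s ht hs0) (hG s hs0 x y) (abs_nonneg _) ?_
        positivity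
      show |η t s * G s x y| ≤ C * C * t * (s ^ (-β) * Real.exp (-(c * r ^ 2 / s)))
      rw [h1]
      refine h2.trans_eq ?_
      have hexp : -c * r ^ 2 / s = -(c * r ^ 2 / s) := by ring
      rw [hexp, div_eq_mul_inv (C * t), ← Real.rpow_neg hs0.le]
      have hss : s ^ (-(1 + α)) * s ^ (-((n : ℝ) + 1) / 2) = s ^ (-β) := by
        rw [← Real.rpow_add hs0]
        congr 1
        rw [hβdef, hγdef]; ring
      linear_combination (C * C * t * Real.exp (-(c * r ^ 2 / s))) * hss
    have hval : (∫ s in Set.Ioi (0:ℝ),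
          C * C * t * (s ^ (-β) * Real.exp (-(c * r ^ 2 / s))))
        = C * C * t * ((c * r ^ 2) ^ (1 - β) * Real.Gamma (β - 1)) := by
      rw [MeasureTheory.integral_const_mul, hBval]
    have hbsplit : (c * r ^ 2) ^ (1 - β) = c ^ (1 - β) * r ^ (2 * (1 - β)) := by
      rw [Real.mul_rpow hc.le (by positivity), ← Real.rpow_natCast r 2,
        ← Real.rpow_mul hr0.le]
      norm_num
    have hrr : r ^ (2 * (1 - β)) * r ^ p = 1 := by
      rw [← Real.rpow_add hr0, show 2 * (1 - β) + p = 0 by rw [hβdef, hγdef, hpdef]; ring,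
        Real.rpow_zero]
    have hDle : (lam + r) ^ p ≤ 2 ^ p * r ^ p := by
      calc (lam + r) ^ p ≤ (2 * r) ^ p :=
            Real.rpow_le_rpow (by positivity) (by linarith) hp0.le
        _ = 2 ^ p * r ^ p := Real.mul_rpow (by norm_num) hr0.le
    calc |∫ s in Set.Ioi (0:ℝ), η t s * G s x y| * (lam + r) ^ p
        ≤ (C * C * t * ((c * r ^ 2) ^ (1 - β) * Real.Gamma (β - 1))) * (lam + r) ^ p := by
          refine mul_le_mul_of_nonneg_right (hbound.trans_eq hval) hD0.le
      _ ≤ (C * C * t * ((c * r ^ 2) ^ (1 - β) * Real.Gamma (β - 1))) * (2 ^ p * r ^ p) := by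
          refine mul_le_mul_of_nonneg_left hDle ?_
          have : (0:ℝ) ≤ Real.Gamma (β - 1) := Real.Gamma_nonneg_of_nonneg (by linarith)
          positivity
      _ = (2 ^ p * (C * C * M)) * t * (r ^ (2 * (1 - β)) * r ^ p) := by
          rw [hbsplit, hMdef]; ring
      _ = (2 ^ p * (C * C * M)) * t := by rw [hrr, mul_one]
      _ ≤ (2 ^ p * (C * K + C * C * M) + 1) * t := by
          have hCK : (0:ℝ) ≤ C * K := by positivity
          nlinarith [mul_nonneg h2p.le hCK]
end
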